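/- If G is perfectly divisible, then chi(G) <= omega(G)*(omega(G)+1)/2. -/

import Mathlib

open SimpleGraph

variable {V : Type*}

/-- A stable (independent) set: no two of its vertices are adjacent. -/
def IsStableSet (G : SimpleGraph V) (S : Set V) : Prop :=
  S.Pairwise fun u v => ¬ G.Adj u v

/-- A graph is perfect if every induced subgraph has chromatic number
equal to clique number. -/
def IsPerfect (G : SimpleGraph V) : Prop :=
  ∀ S : Set V, (G.induce S).chromaticNumber = ((G.induce S).cliqueNum : ℕ∞)

/-- A graph is bipartite if its vertex set partitions into two stable sets. -/
def IsBipartite (G : SimpleGraph V) : Prop :=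
  ∃ A B : Set V, A ∪ B = Set.univ ∧ Disjoint A B ∧
    IsStableSet G A ∧ IsStableSet G B

/-- 2-perfect: the vertex set partitions into two sets each inducing a
perfect graph. -/
def TwoPerfect (G : SimpleGraph V) : Prop :=
  ∃ A B : Set V, A ∪ B = Set.univ ∧ Disjoint A B ∧
    IsPerfect (G.induce A) ∧ IsPerfect (G.induce B)

/-- Perfectly divisible: every (nonempty) induced subgraph H partitions into
A, B with H[A] perfect and ω(H[B]) < ω(H). -/
def PerfectlyDivisible (G : SimpleGraph V) : Prop :=
  ∀ H : Set V, H.Nonempty → ∃ A B : Set V, A ∪ B = H ∧ Disjoint A B ∧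
    IsPerfect (G.induce A) ∧ (G.induce B).cliqueNum < (G.induce H).cliqueNum

/-- Stable-perfect: there is a stable set whose deletion leaves a perfect
graph. -/
def StablePerfect (G : SimpleGraph V) : Prop :=
  ∃ S : Set V, IsStableSet G S ∧ IsPerfect (G.induce Sᶜ)

/-- Nice: every induced subgraph H satisfies χ(H) - ω(H) ∈ {0, 1}. -/
def Nice (G : SimpleGraph V) : Prop :=
  ∀ H : Set V, (G.induce H).chromaticNumber = ((G.induce H).cliqueNum : ℕ∞) ∨
    (G.induce H).chromaticNumber = ((G.induce H).cliqueNum : ℕ∞) + 1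

lemma cliqueNum_le_of_embedding {α β : Type*} [Fintype α] [Fintype β]
    {G : SimpleGraph α} {G' : SimpleGraph β} (f : G ↪g G') :
    G.cliqueNum ≤ G'.cliqueNum := by
  obtain ⟨s, hs⟩ := G.exists_isNClique_cliqueNum
  have hc : G'.IsClique ↑(s.map f.toEmbedding) := by
    rw [Finset.coe_map]
    intro x hx y hy hxy
    obtain ⟨a, ha, rfl⟩ := hx
    obtain ⟨b, hb, rfl⟩ := hy
    exact f.map_adj_iff.2 (hs.isClique ha hb (fun h => hxy (by rw [h])))
  have := hc.card_le_cliqueNum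
  rwa [Finset.card_map, hs.card_eq] at this

lemma cliqueNum_mono [Fintype V] (G : SimpleGraph V) {A B : Set V} (h : A ⊆ B) :
    (G.induce A).cliqueNum ≤ (G.induce B).cliqueNum := by
  classical
  exact cliqueNum_le_of_embedding
    ⟨⟨fun x => ⟨x.1, h x.2⟩, fun a b hab => by cases a; cases b; simpa using hab⟩,
      Iff.rfl⟩

lemma perfect_colorable [Fintype V] (G : SimpleGraph V) {A : Set V}
    (h : IsPerfect (G.induce A)) : (G.induce A).Colorable (G.induce A).cliqueNum := by
  classical
  have h1 := h Set.univ
  have e := ((G.induce A).induceUnivIso)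
  have hchi : (G.induce A).chromaticNumber = ((G.induce A).induce Set.univ).chromaticNumber :=
    le_antisymm (chromaticNumber_mono_of_hom e.symm.toEmbedding.toHom)
      (chromaticNumber_mono_of_hom e.toEmbedding.toHom)
  have hcl : ((G.induce A).induce Set.univ).cliqueNum = (G.induce A).cliqueNum :=
    le_antisymm (cliqueNum_le_of_embedding e.toEmbedding)
      (cliqueNum_le_of_embedding e.symm.toEmbedding)
  rw [← chromaticNumber_le_iff_colorable, hchi, h1, hcl]

lemma colorable_union [Fintype V] (G : SimpleGraph V) {A B H : Set V} (hAB : A ∪ B = H)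
    {a b : ℕ} (hA : (G.induce A).Colorable a) (hB : (G.induce B).Colorable b) :
    (G.induce H).Colorable (a + b) := by
  classical
  obtain ⟨CA⟩ := hA
  obtain ⟨CB⟩ := hB
  have memB : ∀ v : ↑H, v.1 ∉ A → v.1 ∈ B := fun v hv => by
    have hv2 : v.1 ∈ A ∪ B := by rw [hAB]; exact v.2
    exact hv2.resolve_left hv
  have C : (G.induce H).Coloring (Fin a ⊕ Fin b) := by
    refine Coloring.mk
      (fun v => if h : v.1 ∈ A then Sum.inl (CA ⟨v.1, h⟩) else Sum.inr (CB ⟨v.1, memB v h⟩)) ?_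
    intro u w huw
    by_cases hu : u.1 ∈ A <;> by_cases hw : w.1 ∈ A <;> simp [hu, hw]
    · exact CA.valid huw
    · exact CB.valid huw
  simpa using C.colorable

lemma key_colorable [Fintype V] (G : SimpleGraph V) (hPD : PerfectlyDivisible G) :
    ∀ n : ℕ, ∀ H : Set V, (G.induce H).cliqueNum ≤ n →
      (G.induce H).Colorable (n * (n + 1) / 2) := by
  classical
  intro n
  induction n with
  | zero =>
    intro H hH
    have hempty : IsEmpty ↑H := by
      by_contra h
      rw [not_isEmpty_iff] at h
      obtain ⟨x⟩ := h
      have hc : (G.induce H).IsClique (↑({x} : Finset ↑H)) := by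
        simp [Set.pairwise_singleton]
      have := hc.card_le_cliqueNum
      simp at this
      omega
    exact Colorable.of_isEmpty _
  | succ n ih =>
    intro H hH
    by_cases hne : H.Nonempty
    · obtain ⟨A, B, hAB, _, hperf, hlt⟩ := hPD H hne
      have hBsm : (G.induce B).cliqueNum ≤ n := by omega
      have hBcol := ih B hBsm
      have hAsub : A ⊆ H := hAB ▸ Set.subset_union_left
      have hAcl : (G.induce A).cliqueNum ≤ n + 1 :=
        le_trans (cliqueNum_mono G hAsub) hH
      have hAcol : (G.induce A).Colorable (n + 1) :=
        (perfect_colorable G hperf).mono hAcl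
      have := colorable_union G hAB hAcol hBcol
      refine this.mono (le_of_eq ?_)
      have h2 : (n + 1) * (n + 1 + 1) = n * (n + 1) + 2 * (n + 1) := by ring
      obtain ⟨k, hk⟩ := Nat.even_mul_succ_self n
      omega
    · rw [Set.not_nonempty_iff_eq_empty] at hne
      subst hne
      have : IsEmpty ↑(∅ : Set V) := by simp
      exact SimpleGraph.Colorable.of_isEmpty _

theorem stmt_12 {V : Type*} [Fintype V] (G : SimpleGraph V)
    (hPD : PerfectlyDivisible G) :
    G.chromaticNumber ≤ ((G.cliqueNum * (G.cliqueNum + 1) / 2 : ℕ) : ℕ∞) := by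
  classical
  have h1 : (G.induce (Set.univ : Set V)).cliqueNum ≤ G.cliqueNum :=
    cliqueNum_le_of_embedding G.induceUnivIso.toEmbedding
  have hcol := key_colorable G hPD G.cliqueNum Set.univ h1
  have h2 : G.Colorable (G.cliqueNum * (G.cliqueNum + 1) / 2) :=
    hcol.of_hom G.induceUnivIso.symm.toEmbedding.toHom
  exact h2.chromaticNumber_le
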